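/- arXiv:1909.10874 — 6 statements merged into one kernel-verified Lean document; each statement's English description precedes it below -/
import Mathlib

section
/- An r-connected directed graph is not necessarily r-robust: for every integer r ≥ 2 there exists a finite directed graph on some vertex set that is r-connected but is not r-robust. -/
open Classical Finset

/-!
The counterexample is the complete `r`-partite digraph on `Fin (2 * r)` whose parts are the
residue classes mod `r`, each of size two. Deleting fewer than `r` vertices leaves more than
two, so the survivors meet two different parts, and then any two survivors are joined by a path
of length at most two. Splitting the vertices into `{v < r}` and `{v ≥ r}` puts one vertex of every part on
each side, so every vertex has only `r - 1` in-neighbours on the other side.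
-/

/-- `reachSet E S r` is X_S^r : the set of nodes in `S` having at least `r`
in-neighbors outside `S` (an edge `(j,i)`, i.e. `E j i`, is a link from `j` to `i`). -/
noncomputable def reachSet {V : Type*} [Fintype V] (E : V → V → Prop)
    (S : Finset V) (r : ℕ) : Finset V :=
  S.filter fun i => r ≤ (Finset.univ.filter fun j => j ∉ S ∧ E j i).card

def IsRSRobust {V : Type*} [Fintype V] (E : V → V → Prop) (r s : ℕ) : Prop :=
  ∀ V1 V2 : Finset V, V1.Nonempty → V2.Nonempty → Disjoint V1 V2 →
    reachSet E V1 r = V1 ∨ reachSet E V2 r = V2 ∨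
      s ≤ (reachSet E V1 r).card + (reachSet E V2 r).card

def StronglyConnectedOn {V : Type*} (E : V → V → Prop) (T : Set V) : Prop :=
  ∀ a ∈ T, ∀ b ∈ T, Relation.ReflTransGen (fun x y => x ∈ T ∧ y ∈ T ∧ E x y) a b

section CompleteMultipartite

variable {V B : Type*} (f : V → B)

def completeMultipartite : V → V → Prop := fun x y => f x ≠ f y

theorem stronglyConnectedOn_completeMultipartite {T : Set V}
    (hT : ∀ a ∈ T, ∃ c ∈ T, f c ≠ f a) : StronglyConnectedOn (completeMultipartite f) T := by
  intro a ha b hb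
  by_cases hab : f a = f b
  · obtain ⟨c, hc, hca⟩ := hT a ha
    exact .head ⟨ha, hc, Ne.symm hca⟩ (.single ⟨hc, hb, fun h => hca (h.trans hab.symm)⟩)
  · exact .single ⟨ha, hb, hab⟩

variable [Fintype V]

theorem exists_notMem_ne_of_card_add_card_fiber_lt [DecidableEq B] (S : Finset V) (a : V)
    (h : #S + #{v | f v = f a} < Fintype.card V) : ∃ c ∉ S, f c ≠ f a := by
  by_contra! hc
  have hsub : Sᶜ ⊆ ({v | f v = f a} : Finset V) := fun c hcS => by
    simpa using hc c (mem_compl.mp hcS)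
  have := card_le_card hsub
  rw [card_compl] at this
  omega

theorem reachSet_completeMultipartite_eq_empty [DecidableEq V] {S : Finset V} {r : ℕ}
    (hS : #Sᶜ ≤ r) (htwin : ∀ i ∈ S, ∃ j ∉ S, f j = f i) :
    reachSet (completeMultipartite f) S r = ∅ := by
  refine filter_eq_empty_iff.mpr fun i hi => not_le.mpr (lt_of_lt_of_le (card_lt_card ?_) hS)
  obtain ⟨j, hjS, hji⟩ := htwin i hi
  refine (ssubset_iff_of_subset fun k hk => ?_).mpr ⟨j, mem_compl.mpr hjS, ?_⟩
  · simp only [mem_filter, mem_univ, true_and] at hk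
    exact mem_compl.mpr hk.1
  · simp only [mem_filter, not_and]
    exact fun _ _ hne => hne hji

end CompleteMultipartite

theorem not_isRSRobust_of_reachSet_eq_empty {V : Type*} [Fintype V] {E : V → V → Prop}
    {r s : ℕ} {V1 V2 : Finset V} (h1 : V1.Nonempty) (h2 : V2.Nonempty) (hdisj : Disjoint V1 V2)
    (hs : 0 < s) (hV1 : reachSet E V1 r = ∅) (hV2 : reachSet E V2 r = ∅) :
    ¬ IsRSRobust E r s := by
  intro hrob
  rcases hrob V1 V2 h1 h2 hdisj with h | h | h
  · exact h1.ne_empty (hV1 ▸ h).symm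
  · exact h2.ne_empty (hV2 ▸ h).symm
  · rw [hV1, hV2, card_empty] at h
    omega

theorem card_filter_mod_eq_le_two (r k : ℕ) : #{v : Fin (2 * r) | v % r = k} ≤ 2 := by
  -- `v ↦ v / r` is injective on a residue class and takes values below `2`
  calc _ ≤ #(range 2) := card_le_card_of_injOn (fun v => v.val / r) ?_ ?_
    _ = 2 := card_range 2
  · intro v _
    exact mem_range.mpr (Nat.div_lt_of_lt_mul (by simpa [mul_comm] using v.isLt))
  · intro v hv w hw hvw
    simp only [coe_filter, mem_univ, true_and, Set.mem_ofPred_eq] at hv hw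
    have hv' := Nat.div_add_mod v.val r
    have hw' := Nat.div_add_mod w.val r
    simp only at hvw
    exact Fin.ext (by rw [← hv', ← hw', hvw, hv, hw])

theorem exists_mod_eq_lt_iff_not_lt {r : ℕ} (i : Fin (2 * r)) :
    ∃ j : Fin (2 * r), j % r = i % r ∧ (j < r ↔ ¬ i < r) := by
  by_cases hi : i < r
  · exact ⟨⟨i + r, by omega⟩, by simp, by simp [hi]⟩
  · refine ⟨⟨i - r, by omega⟩, ?_, by simp only [not_lt]; omega⟩
    conv_rhs => rw [← Nat.sub_add_cancel (not_lt.mp hi)]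
    simp

theorem connected_not_robust :
    ∀ r : ℕ, 2 ≤ r → ∃ (n : ℕ) (E : Fin n → Fin n → Prop),
      1 < n ∧
      (∀ S : Finset (Fin n), S.card < r → StronglyConnectedOn E {v | v ∉ S}) ∧
      ¬ IsRSRobust E r 1 := by
  intro r hr
  refine ⟨2 * r, completeMultipartite fun v => v.val % r, by omega, fun S hS => ?_, ?_⟩
  · refine stronglyConnectedOn_completeMultipartite _ fun a _ => ?_
    have := card_filter_mod_eq_le_two r (a % r)
    simpa using exists_notMem_ne_of_card_add_card_fiber_lt _ S a (by rw [Fintype.card_fin]; omega)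
  · set V1 : Finset (Fin (2 * r)) := {v | v < r}
    have hV1 : #V1 = r := by simp only [V1, Fin.card_filter_val_lt]; omega
    have hV1c : #V1ᶜ = r := by rw [card_compl, hV1, Fintype.card_fin]; omega
    have htwin : ∀ i, ∃ j, j.val % r = i.val % r ∧ (j ∈ V1 ↔ i ∉ V1) := by
      simpa [V1] using exists_mod_eq_lt_iff_not_lt
    refine not_isRSRobust_of_reachSet_eq_empty (V1 := V1) (V2 := V1ᶜ) (card_pos.mp (by omega))
      (card_pos.mp (by omega)) disjoint_compl_right one_pos
      (reachSet_completeMultipartite_eq_empty _ hV1c.le fun i hi =>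
        (htwin i).imp fun _ ⟨hj, hjV⟩ => ⟨fun h => hjV.mp h hi, hj⟩)
      (reachSet_completeMultipartite_eq_empty _ (by rw [compl_compl, hV1]) fun i hi =>
        (htwin i).imp fun _ ⟨hj, hjV⟩ => ⟨fun h => mem_compl.mp h (hjV.mpr (mem_compl.mp hi)), hj⟩)
end

section
/- If a finite directed graph G on n > 1 vertices is r-robust with r ≥ 1, then G has a directed spanning tree; that is, there exists a vertex from which every other vertex of G is reachable along directed edges. -/
open Classical Finset

/-- Upstream set of `v` : all vertices that can reach `v`. -/
noncomputable def upSet {V : Type*} [Fintype V] (E : V → V → Prop) (v : V) : Finset V :=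
  Finset.univ.filter fun u => Relation.ReflTransGen E u v

lemma mem_upSet {V : Type*} [Fintype V] (E : V → V → Prop) (v u : V) :
    u ∈ upSet E v ↔ Relation.ReflTransGen E u v := by
  simp [upSet]

lemma upSet_reachSet_empty {V : Type*} [Fintype V] (E : V → V → Prop) (v : V) {r : ℕ}
    (hr : 1 ≤ r) : reachSet E (upSet E v) r = ∅ := by
  ext i
  simp only [reachSet, Finset.mem_filter, Finset.notMem_empty, iff_false, not_and]
  intro hi hcard
  have hempty : (Finset.univ.filter fun j => j ∉ upSet E v ∧ E j i) = ∅ := by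
    ext j
    simp only [Finset.mem_filter, Finset.mem_univ, true_and, Finset.notMem_empty, iff_false]
    rintro ⟨hj, hji⟩
    exact hj ((mem_upSet E v j).2 (Relation.ReflTransGen.head hji ((mem_upSet E v i).1 hi)))
  rw [hempty] at hcard
  simp at hcard
  omega

theorem robust_has_spanning_tree {V : Type*} [Fintype V] (E : V → V → Prop) (r : ℕ)
    (hn : 1 < Fintype.card V) (hr : 1 ≤ r) (hrob : IsRSRobust E r 1) :
    ∃ root : V, ∀ v : V, Relation.ReflTransGen E root v := by
  by_contra hno
  push_neg at hno
  have hV : Nonempty V := Fintype.card_pos_iff.mp (by omega)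
  -- choose v minimizing |upSet E v|
  obtain ⟨v, -, hmin⟩ := Finset.exists_min_image Finset.univ
    (fun u => (upSet E u).card) ⟨Classical.arbitrary V, Finset.mem_univ _⟩
  obtain ⟨w, hw⟩ := hno v
  -- disjointness of upSet v and upSet w
  have hdisj : Disjoint (upSet E v) (upSet E w) := by
    rw [Finset.disjoint_left]
    intro x hxv hxw
    -- upSet x ⊆ upSet v, so by minimality they are equal, so v reaches x
    have hsub : upSet E x ⊆ upSet E v := by
      intro y hy
      exact (mem_upSet E v y).2 (((mem_upSet E x y).1 hy).trans ((mem_upSet E v x).1 hxv))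
    have heq : upSet E x = upSet E v :=
      Finset.eq_of_subset_of_card_le hsub (hmin x (Finset.mem_univ x))
    have hvx : Relation.ReflTransGen E v x := by
      have : v ∈ upSet E x := heq ▸ (mem_upSet E v v).2 Relation.ReflTransGen.refl
      exact (mem_upSet E x v).1 this
    exact hw (hvx.trans ((mem_upSet E w x).1 hxw))
  have h1 : (upSet E v).Nonempty := ⟨v, (mem_upSet E v v).2 Relation.ReflTransGen.refl⟩
  have h2 : (upSet E w).Nonempty := ⟨w, (mem_upSet E w w).2 Relation.ReflTransGen.refl⟩
  rcases hrob (upSet E v) (upSet E w) h1 h2 hdisj with h | h | h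
  · rw [upSet_reachSet_empty E v hr] at h
    exact h1.ne_empty h.symm
  · rw [upSet_reachSet_empty E w hr] at h
    exact h2.ne_empty h.symm
  · rw [upSet_reachSet_empty E v hr, upSet_reachSet_empty E w hr] at h
    simp at h
end

section
/- If a finite directed graph G on n > 1 vertices is r-robust, then r ≤ ⌈n/2⌉. -/
/-!
Split the vertices into two halves of sizes `⌊n/2⌋` and `⌈n/2⌉`. A vertex has at most
`⌈n/2⌉` in-neighbours outside its own half, so if `r > ⌈n/2⌉` neither half has a vertex with
`r` in-neighbours outside it, which contradicts `r`-robustness.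
-/

open Classical Finset

section

variable {V : Type*} [Fintype V] (E : V → V → Prop)

lemma reachSet_eq_empty_of_card_compl_lt {S : Finset V} {r : ℕ} (h : #Sᶜ < r) :
    reachSet E S r = ∅ := by
  refine filter_false_of_mem fun i _ hr => ?_
  have hout : (univ.filter fun j => j ∉ S ∧ E j i) ⊆ Sᶜ := fun j hj =>
    mem_compl.mpr (mem_filter.mp hj).2.1
  exact (hr.trans (card_le_card hout)).not_gt h

variable {E}

lemma IsRSRobust.reachSet_nonempty {r s : ℕ} (hrob : IsRSRobust E r s) (hs : 0 < s)
    {V1 V2 : Finset V} (h1 : V1.Nonempty) (h2 : V2.Nonempty) (hd : Disjoint V1 V2) :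
    (reachSet E V1 r).Nonempty ∨ (reachSet E V2 r).Nonempty := by
  rcases hrob V1 V2 h1 h2 hd with hV1 | hV2 | hcard
  · exact .inl (hV1.symm ▸ h1)
  · exact .inr (hV2.symm ▸ h2)
  · by_contra! hempty
    rw [hempty.1, hempty.2, card_empty] at hcard
    omega

lemma IsRSRobust.le_max_card_compl {r s : ℕ} (hrob : IsRSRobust E r s) (hs : 0 < s)
    {S : Finset V} (hS : S.Nonempty) (hSc : Sᶜ.Nonempty) : r ≤ max #S #Sᶜ := by
  by_contra! hr
  have hcompl : #Sᶜᶜ < r := by rw [compl_compl]; exact (le_max_left ..).trans_lt hr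
  rcases hrob.reachSet_nonempty hs hS hSc disjoint_compl_right with h | h
  · exact h.ne_empty (reachSet_eq_empty_of_card_compl_lt E ((le_max_right ..).trans_lt hr))
  · exact h.ne_empty (reachSet_eq_empty_of_card_compl_lt E hcompl)

end

theorem robust_le_half {V : Type*} [Fintype V] (E : V → V → Prop) (r : ℕ)
    (hn : 1 < Fintype.card V) (hrob : IsRSRobust E r 1) :
    (r : ℤ) ≤ ⌈(Fintype.card V : ℚ) / 2⌉ := by
  set n := Fintype.card V
  obtain ⟨S, -, hS⟩ := exists_subset_card_eq (s := (univ : Finset V)) (n := n / 2)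
    (by rw [card_univ]; omega)
  have hSc : #Sᶜ = n - n / 2 := by rw [card_compl, hS]
  have hr := hrob.le_max_card_compl one_pos (card_pos.mp (by rw [hS]; omega))
    (card_pos.mp (by rw [hSc]; omega))
  rw [hS, hSc] at hr
  have h2r : 2 * r ≤ n + 1 := by omega
  rw [Int.le_ceil_iff]
  have h2r' : (2 * r : ℚ) ≤ n + 1 := by exact_mod_cast h2r
  push_cast
  linarith
end

section
/- Let G = (V, E) be a finite directed graph on n > 1 vertices that is (r,s)-robust, let w be an integer with 0 ≤ w < r, and let G' = (V, E₀) be a directed graph obtained from G by removing, for each node of V, at most w of its incoming edges (so E₀ ⊆ E and each node loses at most w in-edges). Then G' is (r-w, s)-robust. -/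
open Classical Finset

lemma reach_subset {V : Type*} [Fintype V] (E E₀ : V → V → Prop) (r w : ℕ)
    (hsub : ∀ j i : V, E₀ j i → E j i)
    (hloss : ∀ i : V, (Finset.univ.filter fun j => E j i ∧ ¬ E₀ j i).card ≤ w)
    (S : Finset V) : reachSet E S r ⊆ reachSet E₀ S (r - w) := by
  intro i hi
  simp only [reachSet, mem_filter] at hi ⊢
  refine ⟨hi.1, ?_⟩
  have hsub' : (Finset.univ.filter fun j => j ∉ S ∧ E j i) ⊆
      (Finset.univ.filter fun j => j ∉ S ∧ E₀ j i) ∪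
      (Finset.univ.filter fun j => E j i ∧ ¬ E₀ j i) := by
    intro j hj
    simp only [mem_filter, mem_union, mem_univ, true_and] at hj ⊢
    by_cases h : E₀ j i
    · exact Or.inl ⟨hj.1, h⟩
    · exact Or.inr ⟨hj.2, h⟩
  have := (card_le_card hsub').trans (card_union_le _ _)
  have h2 := hi.2
  have h3 := hloss i
  omega

theorem robust_remove_edges {V : Type*} [Fintype V] (E E₀ : V → V → Prop) (r s w : ℕ)
    (hn : 1 < Fintype.card V) (hr : r < Fintype.card V) (hs : s < Fintype.card V)
    (hw : w < r)
    (hsub : ∀ j i : V, E₀ j i → E j i)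
    (hloss : ∀ i : V, (Finset.univ.filter fun j => E j i ∧ ¬ E₀ j i).card ≤ w)
    (hrob : IsRSRobust E r s) :
    IsRSRobust E₀ (r - w) s := by
  intro V1 V2 h1 h2 hd
  have key := reach_subset E E₀ r w hsub hloss
  have kS : ∀ S : Finset V, reachSet E₀ S (r - w) ⊆ S := fun S => filter_subset _ _
  rcases hrob V1 V2 h1 h2 hd with h | h | h
  · exact Or.inl (Subset.antisymm (kS V1) (by calc V1 = reachSet E V1 r := h.symm
      _ ⊆ _ := key V1))
  · exact Or.inr (Or.inl (Subset.antisymm (kS V2) (by calc V2 = reachSet E V2 r := h.symm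
      _ ⊆ _ := key V2)))
  · exact Or.inr (Or.inr (h.trans (Nat.add_le_add (card_le_card (key V1)) (card_le_card (key V2)))))
end

section
/- If a finite directed graph G on n > 1 vertices is (r+s-1)-robust, where r ≥ 1 and s ≥ 1 are integers with r, s < n, then G is (r,s)-robust. -/
open Classical Finset

lemma aux_reach {V : Type*} [Fintype V] (E : V → V → Prop) (r s : ℕ)
    (hr1 : 1 ≤ r) (hs1 : 1 ≤ s) (V1 : Finset V)
    (hcard : (reachSet E V1 r).card + 1 ≤ s) (i : V)
    (hi : i ∈ reachSet E (V1 \ reachSet E V1 r) (r + s - 1)) : False := by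
  set A := reachSet E V1 r with hAdef
  simp only [reachSet, Finset.mem_filter] at hi
  obtain ⟨hiV, hN⟩ := hi
  have hiV1 : i ∈ V1 := (Finset.mem_sdiff.mp hiV).1
  have hiA : i ∉ A := (Finset.mem_sdiff.mp hiV).2
  have hsub : (Finset.univ.filter fun j => j ∉ V1 \ A ∧ E j i) ⊆
      (Finset.univ.filter fun j => (j ∉ V1 ∧ E j i)) ∪ A := by
    intro j hj
    simp only [Finset.mem_filter, Finset.mem_union, Finset.mem_sdiff,
      Finset.mem_univ, true_and] at hj ⊢
    tauto
  have hle := Finset.card_le_card hsub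
  have hun := Finset.card_union_le (Finset.univ.filter fun j => (j ∉ V1 ∧ E j i)) A
  have hr' : r ≤ (Finset.univ.filter fun j => j ∉ V1 ∧ E j i).card := by omega
  exact hiA (by simp only [hAdef, reachSet, Finset.mem_filter]; exact ⟨hiV1, hr'⟩)

theorem robust_of_sum_robust {V : Type*} [Fintype V] (E : V → V → Prop) (r s : ℕ)
    (hn : 1 < Fintype.card V) (hr1 : 1 ≤ r) (hs1 : 1 ≤ s)
    (hr : r < Fintype.card V) (hs : s < Fintype.card V)
    (hrob : IsRSRobust E (r + s - 1) 1) :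
    IsRSRobust E r s := by
  intro V1 V2 h1 h2 hdis
  by_cases hA : reachSet E V1 r = V1
  · exact Or.inl hA
  by_cases hB : reachSet E V2 r = V2
  · exact Or.inr (Or.inl hB)
  refine Or.inr (Or.inr ?_)
  by_contra hlt
  push_neg at hlt
  have hAsub : reachSet E V1 r ⊆ V1 := Finset.filter_subset _ _
  have hBsub : reachSet E V2 r ⊆ V2 := Finset.filter_subset _ _
  have hn1 : (V1 \ reachSet E V1 r).Nonempty := by
    rw [Finset.sdiff_nonempty]
    intro h; exact hA (Finset.Subset.antisymm hAsub h)
  have hn2 : (V2 \ reachSet E V2 r).Nonempty := by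
    rw [Finset.sdiff_nonempty]
    intro h; exact hB (Finset.Subset.antisymm hBsub h)
  have hdis' : Disjoint (V1 \ reachSet E V1 r) (V2 \ reachSet E V2 r) :=
    hdis.mono Finset.sdiff_subset Finset.sdiff_subset
  have hc1 : (reachSet E V1 r).card + 1 ≤ s := by
    have := Nat.zero_le (reachSet E V2 r).card; omega
  have hc2 : (reachSet E V2 r).card + 1 ≤ s := by omega
  rcases hrob _ _ hn1 hn2 hdis' with h | h | h
  · obtain ⟨i, hi⟩ := hn1
    rw [← h] at hi
    exact aux_reach E r s hr1 hs1 V1 hc1 i hi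
  · obtain ⟨i, hi⟩ := hn2
    rw [← h] at hi
    exact aux_reach E r s hr1 hs1 V2 hc2 i hi
  · rcases Nat.lt_or_ge 0 (reachSet E (V1 \ reachSet E V1 r) (r + s - 1)).card with hp | hp
    · obtain ⟨i, hi⟩ := Finset.card_pos.mp hp
      exact aux_reach E r s hr1 hs1 V1 hc1 i hi
    · have hp2 : 0 < (reachSet E (V2 \ reachSet E V2 r) (r + s - 1)).card := by omega
      obtain ⟨i, hi⟩ := Finset.card_pos.mp hp2
      exact aux_reach E r s hr1 hs1 V2 hc2 i hi
end

section
/- If a finite directed graph G on n > 1 vertices is r-robust with r ≥ 2, then the minimum in-degree of G is at least r; that is, every vertex of G has at least r in-neighbors. -/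
open Classical Finset

theorem robust_min_indegree {V : Type*} [Fintype V] (E : V → V → Prop) (r : ℕ)
    (hn : 1 < Fintype.card V) (hr : 2 ≤ r) (hrob : IsRSRobust E r 1) :
    ∀ i : V, r ≤ (Finset.univ.filter fun j => E j i).card := by
  intro i
  set V1 : Finset V := {i} with hV1
  set V2 : Finset V := Finset.univ \ {i} with hV2
  have hV2ne : V2.Nonempty := by
    rw [hV2]
    rw [Finset.sdiff_nonempty]
    intro h
    have := Finset.card_le_card h
    simp at this
    omega
  have hdisj : Disjoint V1 V2 := by
    simp [hV1, hV2, Finset.disjoint_sdiff]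
  -- key: any element of reachSet E V2 r gives a contradiction
  have hX2 : reachSet E V2 r = ∅ := by
    rw [Finset.eq_empty_iff_forall_notMem]
    intro x hx
    rw [reachSet, Finset.mem_filter] at hx
    have hsub : (Finset.univ.filter fun j => j ∉ V2 ∧ E j x) ⊆ {i} := by
      intro j hj
      rw [Finset.mem_filter] at hj
      have := hj.2.1
      simp [hV2] at this
      simp [this]
    have := Finset.card_le_card hsub
    simp at this
    omega
  have hmain : r ≤ (Finset.univ.filter fun j => j ∉ V1 ∧ E j i).card := by
    rcases hrob V1 V2 ⟨i, by simp [hV1]⟩ hV2ne hdisj with h | h | h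
    · have : i ∈ reachSet E V1 r := by rw [h]; simp [hV1]
      rw [reachSet, Finset.mem_filter] at this
      exact this.2
    · rw [hX2] at h
      exact absurd h.symm (Finset.nonempty_iff_ne_empty.mp hV2ne)
    · rw [hX2] at h
      simp at h
      obtain ⟨x, hx⟩ := h
      have hx' := hx
      rw [reachSet, Finset.mem_filter] at hx'
      have : x = i := by simpa [hV1] using hx'.1
      subst this
      exact hx'.2
  calc r ≤ (Finset.univ.filter fun j => j ∉ V1 ∧ E j i).card := hmain
    _ ≤ (Finset.univ.filter fun j => E j i).card := by
        apply Finset.card_le_card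
        intro j hj
        rw [Finset.mem_filter] at hj ⊢
        exact ⟨hj.1, hj.2.2⟩
end
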